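/- Let X = ℝ² and let X_p ⊆ ℝ² be the orbit of a point p under the Klein bottle deck transformation group generated by the translation (x,y) ↦ (x, y+1) and the glide reflection (x,y) ↦ (x+1, -y). If p' ∈ X_p has x-coordinate 0 and c' ∈ ℝ² is a point whose Euclidean distance to p' is strictly less than the distance from c' to every other point of X_p, then the horizontal distance |c'.1 - p'.1| is strictly less than 5/8. -/
import Mathlib


/-- Euclidean distance on `ℝ × ℝ`. -/
noncomputable def eudist (p q : ℝ × ℝ) : ℝ :=
  Real.sqrt ((p.1 - q.1) ^ 2 + (p.2 - q.2) ^ 2)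

/-- The orbit of a point `p ∈ ℝ²` under the Klein bottle deck transformation group
generated by `T(x,y) = (x, y+1)` and the glide reflection `R(x,y) = (x+1, -y)`:
a general element `RᵃTᵇ` sends `p` to `(p.1 + a, (-1)ᵃ p.2 + b)`. -/
def kleinOrbit (p : ℝ × ℝ) : Set (ℝ × ℝ) :=
  {q | ∃ a b : ℤ, q = (p.1 + a, (-1 : ℝ) ^ a * p.2 + b)}

/-- If `p' ∈ X_p` has `x`-coordinate `0` and `c'` is strictly closer to `p'` than to every
other point of the orbit `X_p` (i.e. `c'` lies in the open Voronoi cell of `p'`), then the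
horizontal distance `|c'.1 - p'.1|` is strictly less than `5/8`. -/
theorem stmt_0 (p p' c' : ℝ × ℝ) (hp' : p' ∈ kleinOrbit p) (hx : p'.1 = 0)
    (hvor : ∀ q ∈ kleinOrbit p, q ≠ p' → eudist c' p' < eudist c' q) :
    |c'.1 - p'.1| < 5 / 8 := by
  by_contra h
  push_neg at h
  obtain ⟨a₀, b₀, hp⟩ := hp'
  have hx1 : p.1 + (a₀ : ℝ) = 0 := by rw [hp] at hx; exact hx
  have hp1 : p'.1 = p.1 + a₀ := by rw [hp]
  have hp2 : p'.2 = (-1 : ℝ) ^ a₀ * p.2 + b₀ := by rw [hp]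
  set s : ℤ := if 0 ≤ c'.1 then 1 else -1 with hs
  set m : ℤ := round (c'.2 + p'.2) with hm
  have hpow : (-1 : ℝ) ^ (a₀ + s) = -((-1 : ℝ) ^ a₀) := by
    rw [zpow_add₀ (by norm_num : (-1 : ℝ) ≠ 0)]
    rcases ite_eq_or_eq (0 ≤ c'.1) (1 : ℤ) (-1) with hv | hv <;>
      rw [hs, hv] <;> norm_num
  have hqorb : ((s : ℝ), -p'.2 + (m : ℝ)) ∈ kleinOrbit p := by
    refine ⟨a₀ + s, m - b₀, ?_⟩
    have : p.1 + ((a₀ + s : ℤ) : ℝ) = (s : ℝ) := by push_cast; linarith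
    rw [Prod.ext_iff]
    constructor
    · simpa using this.symm
    · simp only [hpow, hp2]
      push_cast
      ring
  have hqne : ((s : ℝ), -p'.2 + (m : ℝ)) ≠ p' := by
    intro hcon
    have h1 : (s : ℝ) = p'.1 := congrArg Prod.fst hcon
    rw [hx] at h1
    rcases ite_eq_or_eq (0 ≤ c'.1) (1 : ℤ) (-1) with hv | hv <;>
      rw [hs, hv] at h1 <;> norm_num at h1
  have hlt := hvor _ hqorb hqne
  have hround : |c'.2 + p'.2 - m| ≤ 1 / 2 := abs_sub_round _
  have hsq : (c'.2 - (-p'.2 + (m : ℝ))) ^ 2 ≤ 1 / 4 := by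
    have : |c'.2 - (-p'.2 + (m : ℝ))| ≤ 1 / 2 := by
      have : c'.2 - (-p'.2 + (m : ℝ)) = c'.2 + p'.2 - m := by ring
      rw [this]; exact hround
    nlinarith [abs_nonneg (c'.2 - (-p'.2 + (m : ℝ))), sq_abs (c'.2 - (-p'.2 + (m : ℝ))),
      this]
  have hxbig : 1 / 4 ≤ 2 * c'.1 * (s : ℝ) - 1 := by
    rw [hx, sub_zero] at h
    rcases le_or_gt 0 c'.1 with hc | hc
    · have hv : s = 1 := if_pos hc
      have : (5 : ℝ) / 8 ≤ c'.1 := by rwa [abs_of_nonneg hc] at h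
      rw [hv]; push_cast; linarith
    · have hv : s = -1 := if_neg (not_le.mpr hc)
      have : (5 : ℝ) / 8 ≤ -c'.1 := by rwa [abs_of_neg hc] at h
      rw [hv]; push_cast; linarith
  have hs2 : ((s : ℝ)) ^ 2 = 1 := by
    rcases ite_eq_or_eq (0 ≤ c'.1) (1 : ℤ) (-1) with hv | hv <;>
      rw [hs, hv] <;> norm_num
  have hle : eudist c' ((s : ℝ), -p'.2 + (m : ℝ)) ≤ eudist c' p' := by
    unfold eudist
    apply Real.sqrt_le_sqrt
    rw [hx]
    dsimp only
    have h0 : (0 : ℝ) ≤ (c'.2 - p'.2) ^ 2 := sq_nonneg _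
    nlinarith [hs2, hsq, hxbig, h0]
  exact absurd hlt (not_lt.mpr hle)
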